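/- arXiv:1304.1990 — 2 statements merged into one kernel-verified Lean document; each statement's English description precedes it below -/
import Mathlib

section
/- Let 2 ≤ k ≤ d−1 and for each j let H̄_k^j = {x ∈ F̄_q^d : h_j(x) = 0}. There is a constant c > 0 depending only on d such that if the characteristic of F_q exceeds c, then for every n ∈ {1, 2, …, d−k−1}: (a) the intersection (∩_{j=1}^{n} H̄_k^j) ∩ H̄_k^{n+1} is nonempty, and (b) there exists a point α ∈ ∩_{j=1}^{n} H̄_k^j with α ∉ H̄_k^{n+1}, i.e. h_j(α) = 0 for j = 1, …, n but h_{n+1}(α) ≠ 0. -/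
open MvPolynomial

noncomputable section

/-- The homogeneous polynomial `h_{j+1}(x) = x_1^{j+2} + ⋯ + x_k^{j+2} − x_{k+j+1}^{j+2}`
(in 0-based indexing, `j : Fin (d-k)` corresponds to the defining equation `h_{j+1}`). -/
def hpoly (K : Type) [CommRing K] (d k : ℕ) (j : Fin (d - k)) : MvPolynomial (Fin d) K :=
  (∑ i : Fin d, if (i : ℕ) < k then X i ^ ((j : ℕ) + 2) else 0)
    - X (⟨k + (j : ℕ), by have h := j.isLt; omega⟩ : Fin d) ^ ((j : ℕ) + 2)

/-- The homogeneous variety `H̄_k` as a set of points with coordinates in `K`. -/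
def Hset (K : Type) [CommRing K] (d k : ℕ) : Set (Fin d → K) :=
  {x | ∀ j : Fin (d - k), eval x (hpoly K d k j) = 0}

open scoped Classical in
/-- The set of `F_q`-points of the homogeneous variety `H_k`, as a finite set. -/
def Hfin (F : Type) [Field F] [Fintype F] (d k : ℕ) : Finset (Fin d → F) :=
  Finset.univ.filter fun x => ∀ j : Fin (d - k), eval x (hpoly F d k j) = 0

open scoped ENNReal in
/-- `L^p` norm with respect to the normalized counting measure on `F_q^d`. -/
def lpNorm {F : Type} [Fintype F] {d : ℕ} (p : ℝ≥0∞) (f : (Fin d → F) → ℂ) : ℝ :=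
  if p = ⊤ then ⨆ x, ‖f x‖
  else (((Fintype.card F : ℝ) ^ d)⁻¹ * ∑ x, ‖f x‖ ^ p.toReal) ^ (1 / p.toReal)

/-- Convolution `f ∗ dσ` with the normalized surface measure on `V`. -/
def convMeas {F : Type} [Field F] [Fintype F] {d : ℕ} (V : Finset (Fin d → F))
    (f : (Fin d → F) → ℂ) : (Fin d → F) → ℂ :=
  fun y => (V.card : ℂ)⁻¹ * ∑ x ∈ V, f (y - x)

end


section

variable {K : Type} [CommRing K] {d k : ℕ}

theorem eval_hpoly (x : Fin d → K) (j : Fin (d - k)) :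
    eval x (hpoly K d k j) =
      (∑ i : Fin d, if (i : ℕ) < k then x i ^ ((j : ℕ) + 2) else 0)
        - x ⟨k + j, by omega⟩ ^ ((j : ℕ) + 2) := by
  simp only [hpoly, map_sub, map_sum, apply_ite (eval x), map_pow, eval_X, map_zero]

theorem eval_zero_hpoly (j : Fin (d - k)) : eval 0 (hpoly K d k j) = 0 := by
  rw [eval_hpoly]
  simp

variable (K d k) in
/-- The point `e₁ + e_{k+1} + ⋯ + e_{k+n}` (1-based), which kills `h_1, …, h_n` and no other `h_j`. -/
def properWitness (n : ℕ) : Fin d → K :=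
  fun i => if (i : ℕ) = 0 ∨ (k ≤ (i : ℕ) ∧ (i : ℕ) < k + n) then 1 else 0

theorem sum_pow_properWitness (hk : 0 < k) (hd : k < d) (n : ℕ) {m : ℕ} (hm : m ≠ 0) :
    (∑ i : Fin d, if (i : ℕ) < k then properWitness K d k n i ^ m else 0) = 1 := by
  rw [Finset.sum_eq_single (⟨0, by omega⟩ : Fin d)]
  · simp [properWitness, hk]
  · intro i _ hi
    have hi0 : (i : ℕ) ≠ 0 := fun h => hi (Fin.ext h)
    by_cases hik : (i : ℕ) < k
    · simp [properWitness, hik, hi0, hm, Nat.not_le.2 hik]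
    · simp [hik]
  · simp

theorem eval_hpoly_properWitness (hk : 0 < k) (n : ℕ) (j : Fin (d - k)) :
    eval (properWitness K d k n) (hpoly K d k j) = if (j : ℕ) < n then 0 else 1 := by
  rw [eval_hpoly, sum_pow_properWitness hk (by have := j.isLt; omega) n (by omega)]
  by_cases hj : (j : ℕ) < n <;> simp [properWitness, hj, hk.ne']

end

/-- For `2 ≤ k ≤ d−1` and `1 ≤ n ≤ d−k−1`, if the characteristic is
large enough (depending only on `d`): (a) the common zero set of `h_1, …, h_{n+1}` over
`F̄_q` is nonempty, and (b) there is a point `α` with `h_j(α) = 0` for `j = 1, …, n`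
but `h_{n+1}(α) ≠ 0`. (In 0-based indexing, `h_{j+1}` is `hpoly _ d k j`.) -/
theorem Hbar_intersection_proper (d : ℕ) :
    ∃ c : ℕ, 0 < c ∧ ∀ k : ℕ, 2 ≤ k → k ≤ d - 1 →
      ∀ (F : Type) [Field F] [Fintype F], c < ringChar F →
        ∀ (n : ℕ) (hn1 : 1 ≤ n) (hn2 : n ≤ d - k - 1),
          (∃ x : Fin d → AlgebraicClosure F, ∀ j : Fin (d - k), (j : ℕ) < n + 1 →
            eval x (hpoly (AlgebraicClosure F) d k j) = 0) ∧
          (∃ α : Fin d → AlgebraicClosure F,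
            (∀ j : Fin (d - k), (j : ℕ) < n →
              eval α (hpoly (AlgebraicClosure F) d k j) = 0) ∧
            eval α (hpoly (AlgebraicClosure F) d k ⟨n, by have h1 := hn1; have h2 := hn2; omega⟩) ≠ 0) := by
  refine ⟨1, one_pos, fun k hk _ F _ _ _ n _ _ => ⟨⟨0, fun j _ => eval_zero_hpoly j⟩, ?_⟩⟩
  have hk0 : 0 < k := by omega
  refine ⟨properWitness _ d k n, fun j hj => ?_, ?_⟩
  · simp [eval_hpoly_properWitness hk0, hj]
  · simp [eval_hpoly_properWitness hk0]
end

section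
/- Let k ≥ 2 and d−k ≥ 4. There is a constant c > 0 depending only on d such that if the characteristic of F_q exceeds c, then there exists a point x ∈ H̄_k with x ≠ 0 at which the (d−k)×d Jacobian matrix (∂h_j/∂x_i)(x) has rank strictly less than d−k; that is, H̄_k has a singular point away from the origin. -/
/-!
Take `x = (1, -1, 0, …, 0, t_1, …, t_{d-k})` with `t_j ^ (j+1) = 1 + (-1) ^ (j+1)`, which is
possible over an algebraically closed field. The power sums of the first `k` coordinates are
`1 + (-1) ^ (j+1)`, so `x ∈ H̄_k`, and `t_j = 0` for even `j`. Hence the gradients of `h_2` and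
`h_4` are supported on the first `k` coordinates, where they are `3 x_i ^ 2` and `5 x_i ^ 4`.
As `x_i ∈ {0, 1, -1}` these rows are proportional, so the Jacobian has rank `< d - k` as soon
as `5 ≠ 0`.
-/

open MvPolynomial

/-- The `(d−k) × d` Jacobian matrix `(∂h_j/∂x_i)(x)` of the system defining `H̄_k`. -/
noncomputable def jacH (K : Type) [CommRing K] (d k : ℕ) (x : Fin d → K) :
    Matrix (Fin (d - k)) (Fin d) K :=
  Matrix.of fun j i => eval x (pderiv i (hpoly K d k j))

theorem Matrix.rank_lt_card_height_of_smul_row_eq {m n K : Type*} [Fintype m] [Fintype n]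
    [Field K] (M : Matrix m n K) {i j : m} (hij : i ≠ j) {a b : K} (ha : a ≠ 0)
    (h : a • M i = b • M j) : M.rank < Fintype.card m := by
  refine M.rank_le_card_height.lt_of_ne fun hrank => ha ?_
  have hli : LinearIndependent K M.row := by
    rwa [linearIndependent_iff_card_eq_finrank_span, Set.finrank, ← M.rank_eq_finrank_span_row,
      eq_comm]
  refine ((LinearIndepOn.pair_iff M.row hij).mp (hli.linearIndepOn _) a (-b) ?_).1
  simp [Matrix.row, h]

section

open Finset

variable {K : Type} {d k : ℕ}

theorem eval_hpoly_s15 [CommRing K] (p : ℕ → K) (j : Fin (d - k)) :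
    eval (fun i : Fin d => p i) (hpoly K d k j) =
      (∑ n ∈ range k, p n ^ ((j : ℕ) + 2)) - p (k + j) ^ ((j : ℕ) + 2) := by
  have hkd : (range d).filter (· < k) = range k := by
    ext n; have := j.isLt; simp only [mem_filter, mem_range]; omega
  simp only [hpoly, map_sub, map_sum, map_pow, eval_X, apply_ite (eval _), map_zero]
  rw [Fin.sum_univ_eq_sum_range (fun n => if n < k then p n ^ ((j : ℕ) + 2) else 0),
    ← sum_filter, hkd]

theorem jacH_apply [CommRing K] (p : ℕ → K) (j : Fin (d - k)) (i : Fin d) :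
    jacH K d k (fun i => p i) j i =
      (if (i : ℕ) < k then ((j : ℕ) + 2 : K) * p i ^ ((j : ℕ) + 1) else 0)
        - if (i : ℕ) = k + j then ((j : ℕ) + 2 : K) * p (k + j) ^ ((j : ℕ) + 1) else 0 := by
  simp only [jacH, Matrix.of_apply, hpoly, map_sub, map_sum, apply_ite (pderiv i), pderiv_pow,
    pderiv_X, map_zero, map_pow, map_mul, eval_X, apply_ite (eval _), map_natCast,
    Pi.single_apply]
  rw [sum_eq_single i (fun x _ hx => by simp [hx]) (by simp),
    show (j : ℕ) + 2 - 1 = j + 1 by omega]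
  simp only [map_one, Fin.ext_iff, eq_comm, if_true, mul_ite, mul_one, mul_zero, Nat.cast_add,
    Nat.cast_ofNat]

/-- The point of the header read as a sequence: its coordinate `k + j` (counting from `0`) is
`r j = t_{j+1}`. -/
def singularPoint [Ring K] (k : ℕ) (r : ℕ → K) (n : ℕ) : K :=
  if k ≤ n then r (n - k) else if n = 0 then 1 else if n = 1 then -1 else 0

theorem singularPoint_add [Ring K] (k : ℕ) (r : ℕ → K) (j : ℕ) :
    singularPoint k r (k + j) = r j := by
  simp [singularPoint]

theorem singularPoint_pow_four [CommRing K] {r : ℕ → K} {n : ℕ} (hn : n < k) :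
    singularPoint k r n ^ 4 = singularPoint k r n ^ 2 := by
  unfold singularPoint
  split_ifs <;> first | omega | norm_num

theorem sum_range_singularPoint_pow [CommRing K] (r : ℕ → K) (hk : 2 ≤ k) {e : ℕ} (he : e ≠ 0) :
    ∑ n ∈ range k, singularPoint k r n ^ e = 1 + (-1) ^ e := by
  rw [sum_eq_add_of_mem 0 1 (mem_range.mpr (by omega)) (mem_range.mpr (by omega)) zero_ne_one]
  · simp [singularPoint, show ¬k ≤ 0 by omega, show ¬k ≤ 1 by omega]
  · intro n hn hn01
    rw [mem_range] at hn
    simp [singularPoint, show ¬k ≤ n by omega, hn01, he]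

theorem singularPoint_mem_Hset [CommRing K] {r : ℕ → K} (hk : 2 ≤ k)
    (hr : ∀ j, r j ^ (j + 2) = 1 + (-1) ^ j) :
    (fun i : Fin d => singularPoint k r i) ∈ Hset K d k := fun j => by
  rw [eval_hpoly_s15, sum_range_singularPoint_pow r hk (by omega), singularPoint_add, hr]
  ring

theorem jacH_singularPoint_of_eq_zero [CommRing K] {r : ℕ → K} {j : Fin (d - k)} (hj : r j = 0)
    (i : Fin d) :
    jacH K d k (fun i => singularPoint k r i) j i =
      if (i : ℕ) < k then ((j : ℕ) + 2 : K) * singularPoint k r i ^ ((j : ℕ) + 1) else 0 := by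
  simp [jacH_apply, singularPoint_add, hj]

theorem rank_jacH_singularPoint_lt [Field K] {r : ℕ → K} (hdk : 4 ≤ d - k)
    (h5 : (5 : K) ≠ 0) (hr1 : r 1 = 0) (hr3 : r 3 = 0) :
    (jacH K d k (fun i => singularPoint k r i)).rank < d - k := by
  set M := jacH K d k fun i => singularPoint k r i
  have hrows : (5 : K) • M ⟨1, by omega⟩ = (3 : K) • M ⟨3, by omega⟩ := funext fun i => by
    simp only [M, Pi.smul_apply, smul_eq_mul, jacH_singularPoint_of_eq_zero (j := ⟨1, _⟩) hr1,
      jacH_singularPoint_of_eq_zero (j := ⟨3, _⟩) hr3]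
    split_ifs with hi
    · rw [singularPoint_pow_four hi]; ring
    · simp
  simpa using M.rank_lt_card_height_of_smul_row_eq (by simp) h5 hrows

end

/-- For `k ≥ 2` and `d−k ≥ 4`, if the characteristic is large enough
(depending only on `d`), then there is a nonzero point of `H̄_k` at which the Jacobian
matrix has rank strictly less than `d−k`; i.e. `H̄_k` has a singular point away from
the origin. -/
theorem Hbar_singular_point (d k : ℕ) (hk : 2 ≤ k) (hdk : 4 ≤ d - k) :
    ∃ c : ℕ, 0 < c ∧ ∀ (F : Type) [Field F] [Fintype F], c < ringChar F →
      ∃ x ∈ Hset (AlgebraicClosure F) d k, x ≠ 0 ∧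
        (jacH (AlgebraicClosure F) d k x).rank < d - k := by
  refine ⟨5, by norm_num, fun F _ _ hchar => ?_⟩
  set K := AlgebraicClosure F
  have h5 : (5 : K) ≠ 0 := fun h => by
    have := Nat.le_of_dvd (by norm_num) ((ringChar.spec K 5).mp (by exact_mod_cast h))
    rw [← Algebra.ringChar_eq F K] at this
    omega
  choose r hr using fun j : ℕ =>
    IsAlgClosed.exists_pow_nat_eq (1 + (-1 : K) ^ j) (Nat.succ_pos (j + 1))
  have hr_odd : ∀ j, Odd j → r j = 0 := fun j hj =>
    (pow_eq_zero_iff (Nat.succ_ne_zero (j + 1))).mp (by rw [hr j, hj.neg_one_pow, add_neg_cancel])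
  refine ⟨fun i => singularPoint k r i, singularPoint_mem_Hset hk hr, fun h => ?_,
    rank_jacH_singularPoint_lt hdk h5 (hr_odd 1 odd_one) (hr_odd 3 (by decide))⟩
  simpa [singularPoint, show ¬k ≤ 0 by omega] using congrFun h ⟨0, by omega⟩
end
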